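/- Let ψ₁, ψ₂ satisfy the generalised Weierstrass system ∂ψ₁ = pψ₂, ∂̄ψ₂ = −pψ₁ with p = |ψ₁|² + |ψ₂|², and suppose ψ₂ is nowhere zero. Then w = ψ₁/ψ̄₂ satisfies the CP¹ sigma model equation ∂∂̄w − (2w̄/(1 + |w|²)) ∂w ∂̄w = 0. -/

import Mathlib

open Complex ComplexConjugate

/-- The Wirtinger derivative `∂ = ∂/∂z`. -/
noncomputable def wdz (f : ℂ → ℂ) (z : ℂ) : ℂ :=
  (1 / 2 : ℂ) * (fderiv ℝ f z 1 - I * fderiv ℝ f z I)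

/-- The Wirtinger derivative `∂̄ = ∂/∂z̄`. -/
noncomputable def wdzbar (f : ℂ → ℂ) (z : ℂ) : ℂ :=
  (1 / 2 : ℂ) * (fderiv ℝ f z 1 + I * fderiv ℝ f z I)

section lemmas
variable {f g : ℂ → ℂ} {z c : ℂ}

lemma wdz_congr (h : f =ᶠ[nhds z] g) : wdz f z = wdz g z := by
  unfold wdz; rw [h.fderiv_eq]

lemma wdzbar_congr (h : f =ᶠ[nhds z] g) : wdzbar f z = wdzbar g z := by
  unfold wdzbar; rw [h.fderiv_eq]

lemma wdz_add (hf : DifferentiableAt ℝ f z) (hg : DifferentiableAt ℝ g z) :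
    wdz (fun t => f t + g t) z = wdz f z + wdz g z := by
  unfold wdz; rw [fderiv_fun_add hf hg]; simp; ring

lemma wdzbar_add (hf : DifferentiableAt ℝ f z) (hg : DifferentiableAt ℝ g z) :
    wdzbar (fun t => f t + g t) z = wdzbar f z + wdzbar g z := by
  unfold wdzbar; rw [fderiv_fun_add hf hg]; simp; ring

lemma wdz_sub (hf : DifferentiableAt ℝ f z) (hg : DifferentiableAt ℝ g z) :
    wdz (fun t => f t - g t) z = wdz f z - wdz g z := by
  unfold wdz; rw [fderiv_fun_sub hf hg]; simp; ring

lemma wdzbar_sub (hf : DifferentiableAt ℝ f z) (hg : DifferentiableAt ℝ g z) :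
    wdzbar (fun t => f t - g t) z = wdzbar f z - wdzbar g z := by
  unfold wdzbar; rw [fderiv_fun_sub hf hg]; simp; ring

lemma wdz_const_mul (hf : DifferentiableAt ℝ f z) (c : ℂ) :
    wdz (fun t => c * f t) z = c * wdz f z := by
  unfold wdz; rw [fderiv_const_mul hf c]; simp; ring

lemma wdzbar_const_mul (hf : DifferentiableAt ℝ f z) (c : ℂ) :
    wdzbar (fun t => c * f t) z = c * wdzbar f z := by
  unfold wdzbar; rw [fderiv_const_mul hf c]; simp; ring

lemma wdz_mul (hf : DifferentiableAt ℝ f z) (hg : DifferentiableAt ℝ g z) :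
    wdz (fun t => f t * g t) z = wdz f z * g z + f z * wdz g z := by
  unfold wdz; rw [fderiv_fun_mul hf hg]; simp [smul_eq_mul]; ring

lemma wdzbar_mul (hf : DifferentiableAt ℝ f z) (hg : DifferentiableAt ℝ g z) :
    wdzbar (fun t => f t * g t) z = wdzbar f z * g z + f z * wdzbar g z := by
  unfold wdzbar; rw [fderiv_fun_mul hf hg]; simp [smul_eq_mul]; ring

lemma fderiv_conj_comp (hf : DifferentiableAt ℝ f z) (v : ℂ) :
    fderiv ℝ (fun t => conj (f t)) z v = conj (fderiv ℝ f z v) := by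
  have h : HasFDerivAt (fun t => conj (f t))
      ((Complex.conjCLE.toContinuousLinearMap).comp (fderiv ℝ f z)) z :=
    (Complex.conjCLE.toContinuousLinearMap.hasFDerivAt).comp z hf.hasFDerivAt
  rw [h.fderiv]; rfl

lemma wdz_conj (hf : DifferentiableAt ℝ f z) :
    wdz (fun t => conj (f t)) z = conj (wdzbar f z) := by
  unfold wdz wdzbar
  rw [fderiv_conj_comp hf 1, fderiv_conj_comp hf I]
  simp [map_mul, map_add, map_sub, map_div₀, map_one, Complex.conj_I, Complex.conj_ofNat]
  ring

lemma wdzbar_conj (hf : DifferentiableAt ℝ f z) :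
    wdzbar (fun t => conj (f t)) z = conj (wdz f z) := by
  unfold wdz wdzbar
  rw [fderiv_conj_comp hf 1, fderiv_conj_comp hf I]
  simp [map_mul, map_add, map_sub, map_div₀, map_one, Complex.conj_I, Complex.conj_ofNat]

lemma fderiv_inv_comp (hf : DifferentiableAt ℝ f z) (h0 : f z ≠ 0) (v : ℂ) :
    fderiv ℝ (fun t => (f t)⁻¹) z v = -(f z ^ 2)⁻¹ * fderiv ℝ f z v := by
  have h : HasFDerivAt (fun t => (f t)⁻¹)
      (((ContinuousLinearMap.smulRight (1 : ℂ →L[ℂ] ℂ) (-(f z ^ 2)⁻¹)).restrictScalars ℝ).comp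
        (fderiv ℝ f z)) z :=
    ((hasFDerivAt_inv h0).restrictScalars ℝ).comp z hf.hasFDerivAt
  rw [h.fderiv]
  simp [ContinuousLinearMap.smulRight_apply, smul_eq_mul]; ring

lemma wdz_inv (hf : DifferentiableAt ℝ f z) (h0 : f z ≠ 0) :
    wdz (fun t => (f t)⁻¹) z = -(wdz f z) / (f z) ^ 2 := by
  unfold wdz
  rw [fderiv_inv_comp hf h0 1, fderiv_inv_comp hf h0 I]
  field_simp
  ring

lemma wdzbar_inv (hf : DifferentiableAt ℝ f z) (h0 : f z ≠ 0) :
    wdzbar (fun t => (f t)⁻¹) z = -(wdzbar f z) / (f z) ^ 2 := by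
  unfold wdzbar
  rw [fderiv_inv_comp hf h0 1, fderiv_inv_comp hf h0 I]
  field_simp
  ring

end lemmas

section smooth
variable {f : ℂ → ℂ} {s : Set ℂ} {z : ℂ}

lemma diffAt_of_contDiffOn (hf : ContDiffOn ℝ (⊤:ℕ∞) f s) (hs : IsOpen s) (hz : z ∈ s) :
    DifferentiableAt ℝ f z :=
  (hf.differentiableOn (by simp)).differentiableAt (hs.mem_nhds hz)

lemma contDiffOn_fderiv_apply (hf : ContDiffOn ℝ (⊤:ℕ∞) f s) (hs : IsOpen s) (v : ℂ) :
    ContDiffOn ℝ (⊤:ℕ∞) (fun t => fderiv ℝ f t v) s := by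
  have h := ((contDiffOn_infty_iff_fderiv_of_isOpen hs).1 hf).2
  exact (ContinuousLinearMap.apply ℝ ℂ v).contDiff.comp_contDiffOn h

lemma contDiffOn_wdz (hf : ContDiffOn ℝ (⊤:ℕ∞) f s) (hs : IsOpen s) :
    ContDiffOn ℝ (⊤:ℕ∞) (fun t => wdz f t) s := by
  have h1 := contDiffOn_fderiv_apply hf hs 1
  have hI := contDiffOn_fderiv_apply hf hs I
  exact contDiffOn_const.mul (h1.sub (contDiffOn_const.mul hI))

lemma contDiffOn_wdzbar (hf : ContDiffOn ℝ (⊤:ℕ∞) f s) (hs : IsOpen s) :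
    ContDiffOn ℝ (⊤:ℕ∞) (fun t => wdzbar f t) s := by
  have h1 := contDiffOn_fderiv_apply hf hs 1
  have hI := contDiffOn_fderiv_apply hf hs I
  exact contDiffOn_const.mul (h1.add (contDiffOn_const.mul hI))

lemma wdz_wdzbar_swap (hf : ContDiffOn ℝ (⊤:ℕ∞) f s) (hs : IsOpen s) (hz : z ∈ s) :
    wdz (fun t => wdzbar f t) z = wdzbar (fun t => wdz f t) z := by
  have hd : ContDiffOn ℝ (⊤:ℕ∞) (fderiv ℝ f) s :=
    ((contDiffOn_infty_iff_fderiv_of_isOpen hs).1 hf).2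
  have hf'' : HasFDerivAt (fderiv ℝ f) (fderiv ℝ (fderiv ℝ f) z) z :=
    ((hd.differentiableOn (by simp)).differentiableAt
      (hs.mem_nhds hz)).hasFDerivAt
  have hev : ∀ᶠ y in nhds z, HasFDerivAt f (fderiv ℝ f y) y := by
    filter_upwards [hs.mem_nhds hz] with y hy
    exact (diffAt_of_contDiffOn hf hs hy).hasFDerivAt
  have hsymm := second_derivative_symmetric_of_eventually hev hf''
  have hgd : ∀ v : ℂ, DifferentiableAt ℝ (fun t => fderiv ℝ f t v) z := fun v =>
    ((ContinuousLinearMap.apply ℝ ℂ v).hasFDerivAt.comp z hf'').differentiableAt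
  have hgv : ∀ v u : ℂ, fderiv ℝ (fun t => fderiv ℝ f t v) z u
      = fderiv ℝ (fderiv ℝ f) z u v := by
    intro v u
    have h : HasFDerivAt (fun t => fderiv ℝ f t v)
        ((ContinuousLinearMap.apply ℝ ℂ v).comp (fderiv ℝ (fderiv ℝ f) z)) z :=
      (ContinuousLinearMap.apply ℝ ℂ v).hasFDerivAt.comp z hf''
    rw [h.fderiv]; rfl
  have e1 : wdz (fun t => wdzbar f t) z
      = (1/2:ℂ) * (wdz (fun t => fderiv ℝ f t 1) z + I * wdz (fun t => fderiv ℝ f t I) z) := by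
    show wdz (fun t => (1/2:ℂ) * (fderiv ℝ f t 1 + I * fderiv ℝ f t I)) z = _
    rw [wdz_const_mul ((hgd 1).fun_add ((hgd I).const_mul I)),
      wdz_add (hgd 1) ((hgd I).const_mul I), wdz_const_mul (hgd I)]
  have e2 : wdzbar (fun t => wdz f t) z
      = (1/2:ℂ) * (wdzbar (fun t => fderiv ℝ f t 1) z - I * wdzbar (fun t => fderiv ℝ f t I) z) := by
    show wdzbar (fun t => (1/2:ℂ) * (fderiv ℝ f t 1 - I * fderiv ℝ f t I)) z = _
    rw [wdzbar_const_mul ((hgd 1).fun_sub ((hgd I).const_mul I)),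
      wdzbar_sub (hgd 1) ((hgd I).const_mul I), wdzbar_const_mul (hgd I)]
  rw [e1, e2]
  unfold wdz wdzbar
  rw [hgv 1 1, hgv 1 I, hgv I 1, hgv I I, hsymm 1 I]
  ring

end smooth

lemma wdz_neg {f : ℂ → ℂ} {z : ℂ} : wdz (fun t => -(f t)) z = -(wdz f z) := by
  unfold wdz; rw [fderiv_fun_neg]; simp; ring

lemma wdzbar_neg {f : ℂ → ℂ} {z : ℂ} : wdzbar (fun t => -(f t)) z = -(wdzbar f z) := by
  unfold wdzbar; rw [fderiv_fun_neg]; simp; ring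

lemma diff_inv {f : ℂ → ℂ} {z : ℂ} (hf : DifferentiableAt ℝ f z) (h0 : f z ≠ 0) :
    DifferentiableAt ℝ (fun t => (f t)⁻¹) z :=
  (((hasFDerivAt_inv h0).restrictScalars ℝ).comp z hf.hasFDerivAt).differentiableAt

set_option maxHeartbeats 2000000 in
/-- If `ψ₁, ψ₂` solve the generalised Weierstrass system with `ψ₂` nowhere zero,
then `w = ψ₁/ψ̄₂` satisfies the `CP¹` sigma model equation
`∂∂̄w - (2w̄/(1+|w|²)) ∂w ∂̄w = 0`. -/
theorem gw_to_cp1 (s : Set ℂ) (hs : IsOpen s) (ψ₁ ψ₂ : ℂ → ℂ)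
    (hψ₁ : ContDiffOn ℝ (⊤ : ℕ∞) ψ₁ s) (hψ₂ : ContDiffOn ℝ (⊤ : ℕ∞) ψ₂ s)
    (hψ₂ne : ∀ z ∈ s, ψ₂ z ≠ 0)
    (h1 : ∀ z ∈ s, wdz ψ₁ z = ((normSq (ψ₁ z) + normSq (ψ₂ z) : ℝ) : ℂ) * ψ₂ z)
    (h2 : ∀ z ∈ s, wdzbar ψ₂ z = -((normSq (ψ₁ z) + normSq (ψ₂ z) : ℝ) : ℂ) * ψ₁ z)
    (w : ℂ → ℂ) (hw : ∀ z, w z = ψ₁ z / conj (ψ₂ z)) :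
    ∀ z ∈ s,
      wdz (fun t => wdzbar w t) z
        - 2 * conj (w z) / (1 + ((normSq (w z) : ℝ) : ℂ)) * wdz w z * wdzbar w z = 0 := by
  have hψ₁' : ContDiffOn ℝ (⊤:ℕ∞) ψ₁ s := hψ₁.of_le (by simp)
  have hψ₂' : ContDiffOn ℝ (⊤:ℕ∞) ψ₂ s := hψ₂.of_le (by simp)
  set C : ℂ → ℂ := fun t => conj (ψ₂ t) with hC_def
  set C₁ : ℂ → ℂ := fun t => conj (ψ₁ t) with hC₁_def
  set P : ℂ → ℂ := fun t => ψ₁ t * C₁ t + ψ₂ t * C t with hP_def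
  have hC : ContDiffOn ℝ (⊤:ℕ∞) C s := Complex.conjCLE.contDiff.comp_contDiffOn hψ₂'
  have hC₁ : ContDiffOn ℝ (⊤:ℕ∞) C₁ s := Complex.conjCLE.contDiff.comp_contDiffOn hψ₁'
  set A : ℂ → ℂ := fun t => wdzbar ψ₁ t with hA_def
  set B : ℂ → ℂ := fun t => wdzbar C t with hB_def
  have hA : ContDiffOn ℝ (⊤:ℕ∞) A s := contDiffOn_wdzbar hψ₁' hs
  have hB : ContDiffOn ℝ (⊤:ℕ∞) B s := contDiffOn_wdzbar hC hs
  have dψ₁ : ∀ t ∈ s, DifferentiableAt ℝ ψ₁ t := fun t ht => diffAt_of_contDiffOn hψ₁' hs ht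
  have dψ₂ : ∀ t ∈ s, DifferentiableAt ℝ ψ₂ t := fun t ht => diffAt_of_contDiffOn hψ₂' hs ht
  have dC : ∀ t ∈ s, DifferentiableAt ℝ C t := fun t ht => diffAt_of_contDiffOn hC hs ht
  have dC₁ : ∀ t ∈ s, DifferentiableAt ℝ C₁ t := fun t ht => diffAt_of_contDiffOn hC₁ hs ht
  have dA : ∀ t ∈ s, DifferentiableAt ℝ A t := fun t ht => diffAt_of_contDiffOn hA hs ht
  have dB : ∀ t ∈ s, DifferentiableAt ℝ B t := fun t ht => diffAt_of_contDiffOn hB hs ht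
  have dP : ∀ t ∈ s, DifferentiableAt ℝ P t := fun t ht =>
    ((dψ₁ t ht).mul (dC₁ t ht)).add ((dψ₂ t ht).mul (dC t ht))
  have hC0 : ∀ t ∈ s, C t ≠ 0 := fun t ht => by
    simp only [hC_def]; exact fun h => hψ₂ne t ht (by simpa using congrArg conj h)
  have hPcast : ∀ t, ((normSq (ψ₁ t) + normSq (ψ₂ t) : ℝ) : ℂ) = P t := by
    intro t
    simp only [hP_def, hC_def, hC₁_def, ofReal_add, ← mul_conj]
  have h1' : ∀ t ∈ s, wdz ψ₁ t = P t * ψ₂ t := fun t ht => by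
    rw [h1 t ht, hPcast]
  have h2' : ∀ t ∈ s, wdzbar ψ₂ t = -(P t * ψ₁ t) := fun t ht => by
    rw [h2 t ht, hPcast]; ring
  have hPconj : ∀ t, conj (P t) = P t := by
    intro t; simp only [hP_def, hC_def, hC₁_def, map_add, map_mul, conj_conj]; ring
  have hwdzC : ∀ t ∈ s, wdz C t = -(P t * C₁ t) := fun t ht => by
    have h : wdz C t = conj (wdzbar ψ₂ t) := wdz_conj (dψ₂ t ht)
    rw [h, h2' t ht, map_neg, map_mul, hPconj]
  have hwdzbarC₁ : ∀ t ∈ s, wdzbar C₁ t = P t * C t := fun t ht => by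
    have h : wdzbar C₁ t = conj (wdz ψ₁ t) := wdzbar_conj (dψ₁ t ht)
    rw [h, h1' t ht, map_mul, hPconj]
  have hwdzψ₂ : ∀ t ∈ s, wdz ψ₂ t = conj (B t) := fun t ht => by
    have h : B t = conj (wdz ψ₂ t) := wdzbar_conj (dψ₂ t ht)
    rw [h, conj_conj]
  have hwdzbarP : ∀ t ∈ s, wdzbar P t = A t * C₁ t + ψ₂ t * B t := fun t ht => by
    have h0 : wdzbar P t = wdzbar (fun x => ψ₁ x * C₁ x + ψ₂ x * C x) t := rfl
    rw [h0, wdzbar_add ((dψ₁ t ht).fun_mul (dC₁ t ht)) ((dψ₂ t ht).fun_mul (dC t ht)),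
      wdzbar_mul (dψ₁ t ht) (dC₁ t ht), wdzbar_mul (dψ₂ t ht) (dC t ht),
      hwdzbarC₁ t ht, h2' t ht]
    have hAt : wdzbar ψ₁ t = A t := rfl
    have hBt : wdzbar C t = B t := rfl
    rw [hAt, hBt]; ring
  have hwfun : w = fun t => ψ₁ t * (C t)⁻¹ := funext fun t => by
    rw [hw t, div_eq_mul_inv]
  have hwbar : ∀ t ∈ s, wdzbar w t = A t * (C t)⁻¹ + ψ₁ t * (-(B t) * (C t * C t)⁻¹) := by
    intro t ht
    rw [hwfun]
    rw [wdzbar_mul (dψ₁ t ht) (diff_inv (dC t ht) (hC0 t ht)),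
      wdzbar_inv (dC t ht) (hC0 t ht)]
    have hAt : wdzbar ψ₁ t = A t := rfl
    have hBt : wdzbar C t = B t := rfl
    rw [hAt, hBt, div_eq_mul_inv, sq]
  intro z hz
  have hmem : s ∈ nhds z := hs.mem_nhds hz
  have hwdzA : ∀ u ∈ s, wdz A u = (A u * C₁ u + ψ₂ u * B u) * ψ₂ u + P u * -(P u * ψ₁ u) := by
    intro u hu
    have h0 : wdz A u = wdzbar (fun t => wdz ψ₁ t) u := wdz_wdzbar_swap hψ₁' hs hu
    have hcongr : (fun t => wdz ψ₁ t) =ᶠ[nhds u] (fun t => P t * ψ₂ t) :=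
      Filter.eventuallyEq_of_mem (hs.mem_nhds hu) h1'
    rw [h0, wdzbar_congr hcongr, wdzbar_mul (dP u hu) (dψ₂ u hu), hwdzbarP u hu, h2' u hu]
  have hwdzB : wdz B z = -((A z * C₁ z + ψ₂ z * B z) * C₁ z + P z * (P z * C z)) := by
    have h0 : wdz B z = wdzbar (fun t => wdz C t) z := wdz_wdzbar_swap hC hs hz
    have hcongr : (fun t => wdz C t) =ᶠ[nhds z] (fun t => -(P t * C₁ t)) :=
      Filter.eventuallyEq_of_mem hmem hwdzC
    rw [h0, wdzbar_congr hcongr, wdzbar_neg,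
      wdzbar_mul (dP z hz) (dC₁ z hz), hwdzbarP z hz, hwdzbarC₁ z hz]
  have hwdzw : wdz w z = (P z * ψ₂ z) * (C z)⁻¹ + ψ₁ z * (-(-(P z * C₁ z)) / (C z) ^ 2) := by
    rw [hwfun, wdz_mul (dψ₁ z hz) (diff_inv (dC z hz) (hC0 z hz)),
      wdz_inv (dC z hz) (hC0 z hz), h1' z hz, hwdzC z hz]
  have hmain : wdz (fun t => wdzbar w t) z
      = (wdz A z * (C z)⁻¹ + A z * (-(wdz C z) / (C z) ^ 2))
        + (wdz ψ₁ z * (-(B z) * (C z * C z)⁻¹)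
          + ψ₁ z * ((-(wdz B z)) * (C z * C z)⁻¹
            + (-(B z)) * (-(wdz C z * C z + C z * wdz C z) / (C z * C z) ^ 2))) := by
    have hcongr : (fun t => wdzbar w t)
        =ᶠ[nhds z] (fun t => A t * (C t)⁻¹ + ψ₁ t * (-(B t) * (C t * C t)⁻¹)) :=
      Filter.eventuallyEq_of_mem hmem hwbar
    rw [wdz_congr hcongr]
    have dCinv := diff_inv (dC z hz) (hC0 z hz)
    have dCC : DifferentiableAt ℝ (fun t => C t * C t) z := (dC z hz).mul (dC z hz)
    have hCC0 : C z * C z ≠ 0 := mul_ne_zero (hC0 z hz) (hC0 z hz)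
    have dCCinv := diff_inv dCC hCC0
    have dnB : DifferentiableAt ℝ (fun t => -(B t)) z := (dB z hz).neg
    rw [wdz_add ((dA z hz).fun_mul dCinv) ((dψ₁ z hz).fun_mul (dnB.fun_mul dCCinv)),
      wdz_mul (dA z hz) dCinv, wdz_inv (dC z hz) (hC0 z hz),
      wdz_mul (dψ₁ z hz) (dnB.fun_mul dCCinv),
      wdz_mul dnB dCCinv, wdz_inv dCC hCC0, wdz_mul (dC z hz) (dC z hz), wdz_neg]
  have hwz : w z = ψ₁ z * (C z)⁻¹ := by rw [hwfun]
  have hconjw : conj (w z) = C₁ z * (ψ₂ z)⁻¹ := by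
    rw [hwz, map_mul, map_inv₀]
    simp only [hC₁_def, hC_def, conj_conj]
  have hnsw : ((normSq (w z) : ℝ) : ℂ) = w z * conj (w z) := (mul_conj (w z)).symm
  have hden : (1 : ℂ) + ((normSq (w z) : ℝ) : ℂ) ≠ 0 := by
    have h0 : (0:ℝ) < 1 + normSq (w z) := by have := normSq_nonneg (w z); linarith
    intro h
    rw [show ((1:ℂ) + ((normSq (w z) : ℝ) : ℂ)) = (((1 + normSq (w z) : ℝ)) : ℂ) by
      push_cast; ring] at h
    exact h0.ne' (by exact_mod_cast h)
  have hb := hψ₂ne z hz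
  have hcb := hC0 z hz
  rw [hmain]
  rw [hwbar z hz]
  rw [hwdzw]
  rw [hwdzA z hz]
  rw [hwdzB]
  rw [hwdzC z hz]
  rw [h1' z hz]
  rw [hnsw]
  rw [hconjw]
  rw [hwz]
  have hsum : P z ≠ 0 := by
    rw [← hPcast z]
    have h0 : (0:ℝ) < normSq (ψ₁ z) + normSq (ψ₂ z) := by
      have := normSq_pos.mpr (hψ₂ne z hz); have := normSq_nonneg (ψ₁ z); linarith
    exact_mod_cast h0.ne'
  have hden2 : (1:ℂ) + ψ₁ z * (C z)⁻¹ * (C₁ z * (ψ₂ z)⁻¹) = P z * (ψ₂ z * C z)⁻¹ := by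
    simp only [hP_def]
    field_simp
    ring
  rw [hden2]
  have hsum' : ψ₁ z * C₁ z + ψ₂ z * C z ≠ 0 := by
    simpa only [hP_def] using hsum
  simp only [hP_def]
  field_simp [hb, hcb, hsum']
  ring_nf
  have hsum : C₁ z * ψ₁ z + C z * ψ₂ z ≠ 0 := by rwa [mul_comm (C₁ z), mul_comm (C z)]
  have hu := inv_mul_cancel₀ hsum
  linear_combination (-(-(C₁ z * C z * ψ₁ z * ψ₂ z * B z * 2) + C₁ z * C z ^ 2 * ψ₂ z * A z * 2
    + C₁ z ^ 2 * C z * ψ₁ z * A z * 2 - C₁ z ^ 2 * ψ₁ z ^ 2 * B z * 2)) * hu
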